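/- arXiv:0907.1432 — 4 statements merged into one kernel-verified Lean document; each statement's English description precedes it below -/
import Mathlib

section
/- Let N be a (T+1)-layered linear deterministic network over 𝔽_p, and suppose a linear coding scheme (C_k, F_j, D_k) linearly solves N. Then the linear coding scheme for the reciprocal network N′ given by C′_k = D_k^T, D′_k = C_k^T, and F′_j = F_j^T linearly solves N′. In particular, if N is linearly solvable then so is its reciprocal N′. -/
open Matrix

/-!
A `(T+1)`-layered linear deterministic network over `𝔽_p = ZMod p`.
Layer `m` (for `0 ≤ m ≤ T`) has a finite set of vertices `V m`; the field `V` is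
indexed by all of `ℕ` for convenience, but only layers `0,…,T` play a role.
`G m i j` is the channel gain matrix on the edge from node `i` in layer `m`
to node `j` in layer `m+1` (it is the zero matrix when there is no edge);
only `m < T` is relevant.  There are `n` unicast messages; message `k` has
length `w k`, source node `src k` in layer `0` and destination node `dst k`
in layer `T`.
-/
structure LayeredNetwork (p q T n : ℕ) where
  V : ℕ → Type
  fintypeV : ∀ m, Fintype (V m)
  decEqV : ∀ m, DecidableEq (V m)
  G : (m : ℕ) → V m → V (m + 1) → Matrix (Fin q) (Fin q) (ZMod p)
  w : Fin n → ℕ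
  src : Fin n → V 0
  dst : Fin n → V T

attribute [instance] LayeredNetwork.fintypeV LayeredNetwork.decEqV

/-- A linear coding scheme: encoding matrices `C k` at the sources, relay
matrices `F m j` at the intermediate nodes (only layers `1,…,T-1` are relevant),
and decoding matrices `D k` at the destinations. -/
structure Scheme {p q T n : ℕ} (N : LayeredNetwork p q T n) where
  C : (k : Fin n) → Matrix (Fin q) (Fin (N.w k)) (ZMod p)
  F : (m : ℕ) → N.V m → Matrix (Fin q) (Fin q) (ZMod p)
  D : (k : Fin n) → Matrix (Fin (N.w k)) (Fin q) (ZMod p)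

variable {p q T n : ℕ} {N : LayeredNetwork p q T n}

/-- A tuple of messages `W k ∈ 𝔽_p^{w k}`. -/
def Msg (N : LayeredNetwork p q T n) : Type :=
  (k : Fin n) → Fin (N.w k) → ZMod p

/-- The signal transmitted by each node: a source node `j` (layer `0`) sends
`x_j = ∑_{k : src k = j} C_k W_k`; a node `j` in layer `m+1` sends
`x_j = F_j y_j` where `y_j = ∑_i G_{ij} x_i` is its received signal. -/
def xSig (S : Scheme N) (W : Msg N) : (m : ℕ) → N.V m → (Fin q → ZMod p)
  | 0, j => ∑ k : Fin n, if N.src k = j then (S.C k).mulVec (W k) else 0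
  | m + 1, j => (S.F (m + 1) j).mulVec (∑ i : N.V m, (N.G m i j).mulVec (xSig S W m i))

/-- The signal received by a node `j` in layer `m ≥ 1`: `y_j = ∑_i G_{ij} x_i`. -/
def ySig (S : Scheme N) (W : Msg N) : (m : ℕ) → N.V m → (Fin q → ZMod p)
  | 0, _ => 0
  | m + 1, j => ∑ i : N.V m, (N.G m i j).mulVec (xSig S W m i)

/-- The reconstructed message `Ŵ_k = D_k y_{dst k}` at the destination of message `k`. -/
def decode (S : Scheme N) (W : Msg N) (k : Fin n) : Fin (N.w k) → ZMod p :=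
  (S.D k).mulVec (ySig S W T (N.dst k))

/-- The scheme linearly solves the network: `Ŵ_k = W_k` for every choice of messages. -/
def Solves (N : LayeredNetwork p q T n) (S : Scheme N) : Prop :=
  ∀ (W : Msg N) (k : Fin n), decode S W k = W k

/-- The network is linearly solvable: some linear coding scheme solves it. -/
def LinearlySolvable (N : LayeredNetwork p q T n) : Prop :=
  ∃ S : Scheme N, Solves N S

/-- The reciprocal network: the layers in reversed order (layer `m` of the
reciprocal is layer `T - m` of `N`), the channel gain matrix on each reversed
edge is the transpose of the original one, and for every message the roles of
the source and the destination are swapped. -/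
def LayeredNetwork.reciprocal (N : LayeredNetwork p q T n) : LayeredNetwork p q T n where
  V := fun m => N.V (T - m)
  fintypeV := fun m => N.fintypeV (T - m)
  decEqV := fun m => N.decEqV (T - m)
  G := fun m j i =>
    if h : m < T then
      (N.G (T - m - 1) i (cast (congrArg N.V (by omega : T - m = T - m - 1 + 1)) j))ᵀ
    else 0
  w := N.w
  src := N.dst
  dst := fun k => cast (congrArg N.V (by omega : (0 : ℕ) = T - T)) (N.src k)

/-- The reciprocal linear coding scheme: `C′_k = D_kᵀ`, `F′_j = F_jᵀ`
(the node `j` in layer `m` of the reciprocal network is the node `j` in layer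
`T - m` of `N`), and `D′_k = C_kᵀ`. -/
def Scheme.reciprocal (S : Scheme N) : Scheme N.reciprocal where
  C := fun k => (S.D k)ᵀ
  F := fun m j => (S.F (T - m) j)ᵀ
  D := fun k => (S.C k)ᵀ

/-!
The gain from message `l` to the decoder of message `k` is `D_k Y C_l`, where `Y` sums, over all
layered paths from `S_l` to `D_k`, the products `G F G ⋯ F G` of the matrices met along the path.
The reciprocal scheme runs through the same paths backwards with every factor transposed, so its
gain from `l` to `k` is `(D_l Y C_k)ᵀ`: the block gain matrix of the reciprocal scheme is the
transpose of the original one. A scheme solves its network exactly when this block matrix is the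
identity, and the identity is its own transpose.
-/

theorem apply_cast_congrArg {ι α : Sort*} {β : ι → Sort*} (f : ∀ i, β i → α) {a b : ι}
    (h : a = b) (x : β a) : f b (cast (congrArg β h) x) = f a x := by
  subst h; rfl

namespace LayeredNetwork

theorem G_congr (N : LayeredNetwork p q T n) {a b : ℕ} (h : a = b)
    {x : N.V a} {y : N.V (a + 1)} {x' : N.V b} {y' : N.V (b + 1)}
    (hx : HEq x x') (hy : HEq y y') : N.G a x y = N.G b x' y' := by
  subst h hx hy; rfl

theorem reciprocal_G {m : ℕ} (hm : m < T) (i : N.reciprocal.V m) (j : N.reciprocal.V (m + 1)) :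
    N.reciprocal.G m i j =
      (N.G (T - m - 1) j (cast (congrArg N.V (by omega : T - m = T - m - 1 + 1)) i))ᵀ :=
  dif_pos hm

end LayeredNetwork

namespace Scheme

variable (S : Scheme N)

def xTransfer : (m : ℕ) → N.V m → N.V 0 → Matrix (Fin q) (Fin q) (ZMod p)
  | 0, j, s => if s = j then 1 else 0
  | m + 1, j, s => S.F (m + 1) j * ∑ i : N.V m, N.G m i j * xTransfer m i s

def yTransfer : (m : ℕ) → N.V m → N.V 0 → Matrix (Fin q) (Fin q) (ZMod p)
  | 0, _, _ => 0
  | m + 1, j, s => ∑ i : N.V m, N.G m i j * S.xTransfer m i s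

theorem xTransfer_eq_F_mul_yTransfer {m : ℕ} (hm : 1 ≤ m) (j : N.V m) (s : N.V 0) :
    S.xTransfer m j s = S.F m j * S.yTransfer m j s := by
  obtain ⟨m, rfl⟩ : ∃ m', m = m' + 1 := ⟨m - 1, by omega⟩
  rfl

theorem yTransfer_one (j : N.V 1) (s : N.V 0) : S.yTransfer 1 j s = N.G 0 s j := by
  simp [yTransfer, xTransfer]

theorem xSig_eq_sum (W : Msg N) (m : ℕ) (j : N.V m) :
    xSig S W m j = ∑ l, (S.xTransfer m j (N.src l) * S.C l) *ᵥ W l := by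
  induction m with
  | zero =>
    simp only [xSig, xTransfer]
    congr! 1 with l
    split_ifs <;> simp
  | succ m ih =>
    simp only [xSig, xTransfer, ih, mulVec_sum, Matrix.mul_sum, Matrix.sum_mul, sum_mulVec,
      mulVec_mulVec, Matrix.mul_assoc]
    exact Finset.sum_comm

theorem ySig_eq_sum (W : Msg N) (m : ℕ) (j : N.V m) :
    ySig S W m j = ∑ l, (S.yTransfer m j (N.src l) * S.C l) *ᵥ W l := by
  cases m with
  | zero => simp [ySig, yTransfer]
  | succ m =>
    simp only [ySig, yTransfer, xSig_eq_sum, mulVec_sum, Matrix.sum_mul, sum_mulVec,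
      mulVec_mulVec, Matrix.mul_assoc]
    exact Finset.sum_comm

def gain : Matrix (Σ k, Fin (N.w k)) (Σ k, Fin (N.w k)) (ZMod p) :=
  of fun x y => (S.D x.1 * S.yTransfer T (N.dst x.1) (N.src y.1) * S.C y.1) x.2 y.2

theorem uncurry_decode (W : Msg N) :
    Sigma.uncurry (decode S W) = S.gain *ᵥ Sigma.uncurry W := by
  ext ⟨k, a⟩
  rw [Sigma.uncurry, decode, ySig_eq_sum, mulVec_sum]
  simp only [mulVec_mulVec, Finset.sum_apply, mulVec, dotProduct, Fintype.sum_sigma, gain,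
    of_apply, Matrix.mul_assoc, Sigma.uncurry]

theorem solves_iff_gain_eq_one : Solves N S ↔ S.gain = 1 := by
  let e := (Equiv.piCurry fun k (_ : Fin (N.w k)) => ZMod p).symm
  calc Solves N S ↔ ∀ W : Msg N, S.gain *ᵥ e W = e W := by
        refine forall_congr' fun W => ?_
        rw [show e W = Sigma.uncurry W from rfl, ← uncurry_decode]
        exact funext_iff.symm.trans e.injective.eq_iff.symm
    _ ↔ ∀ v, S.gain *ᵥ v = v := e.forall_congr_right (q := fun v => S.gain *ᵥ v = v)
    _ ↔ S.gain = 1 := by simp only [ext_iff_mulVec, one_mulVec]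

theorem transpose_reciprocal_xTransfer_succ {m : ℕ} (hm : m < T) (j : N.V (T - (m + 1)))
    (d : N.V T) :
    (S.reciprocal.xTransfer (m + 1) j d)ᵀ =
      (∑ i : N.V (T - m), (S.reciprocal.xTransfer m i d)ᵀ *
        N.G (T - m - 1) j (cast (congrArg N.V (by omega : T - m = T - m - 1 + 1)) i)) *
        S.F (T - (m + 1)) j := by
  simp only [xTransfer, transpose_mul, transpose_sum]
  congr 1
  refine Finset.sum_congr rfl fun i _ => congrArg (HMul.hMul _) ?_
  exact (congrArg transpose (N.reciprocal_G hm i j)).trans (transpose_transpose _)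

-- Cut every path from the sources to `d` at layer `T - m`: the part beyond the cut, read
-- backwards, is what the reciprocal scheme transmits through its first `m` layers.
theorem yTransfer_eq_sum_reciprocal_xTransfer (d : N.V T) (s : N.V 0) {m : ℕ} (hm : m < T) :
    S.yTransfer T d s =
      ∑ j : N.V (T - m), (S.reciprocal.xTransfer m j d)ᵀ * S.yTransfer (T - m) j s := by
  induction m with
  | zero =>
    simp only [xTransfer, apply_ite transpose, ite_mul, transpose_one, transpose_zero, one_mul,
      zero_mul]
    exact ((Finset.sum_ite_eq Finset.univ d fun j => S.yTransfer (T - 0) j s).trans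
      (if_pos (Finset.mem_univ _))).symm
  | succ m ih =>
    rw [ih (by omega)]
    simp only [S.transpose_reciprocal_xTransfer_succ (by omega : m < T), Matrix.sum_mul,
      Matrix.mul_assoc, ← S.xTransfer_eq_F_mul_yTransfer (by omega : 1 ≤ T - (m + 1))]
    rw [Finset.sum_comm]
    refine Finset.sum_congr rfl fun i _ => ?_
    rw [← Finset.mul_sum,
      ← apply_cast_congrArg (fun a i => S.yTransfer a i s) (by omega : T - m = T - m - 1 + 1)]
    rfl

theorem reciprocal_yTransfer (k l : Fin n) :
    S.reciprocal.yTransfer T (N.reciprocal.dst k) (N.reciprocal.src l) =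
      (S.yTransfer T (N.dst l) (N.src k))ᵀ := by
  rcases T with _ | t
  · simp [yTransfer]
  rw [S.yTransfer_eq_sum_reciprocal_xTransfer _ _ t.lt_succ_self, yTransfer]
  simp only [N.reciprocal_G t.lt_succ_self, transpose_sum, transpose_mul, transpose_transpose]
  refine Finset.sum_congr rfl fun i _ => ?_
  congr 2
  refine Eq.trans ?_ (apply_cast_congrArg (fun a i => S.yTransfer a i (N.src k))
    (by omega : t + 1 - t = 1) i)
  rw [yTransfer_one]
  exact N.G_congr (by omega) (cast_heq _ _) ((cast_heq _ _).trans (cast_heq _ _).symm)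

theorem reciprocal_gain : S.reciprocal.gain = S.gainᵀ := by
  ext x y
  change (S.reciprocal.D x.1 * S.reciprocal.yTransfer T (N.reciprocal.dst x.1)
    (N.reciprocal.src y.1) * S.reciprocal.C y.1) x.2 y.2 =
      (S.D y.1 * S.yTransfer T (N.dst y.1) (N.src x.1) * S.C x.1) y.2 x.2
  rw [reciprocal_yTransfer]
  have h : (S.C x.1)ᵀ * (S.yTransfer T (N.dst y.1) (N.src x.1))ᵀ * (S.D y.1)ᵀ =
      (S.D y.1 * S.yTransfer T (N.dst y.1) (N.src x.1) * S.C x.1)ᵀ := by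
    simp only [transpose_mul, Matrix.mul_assoc]
  exact congrFun (congrFun h x.2) y.2

end Scheme

theorem Solves.reciprocal {S : Scheme N} (hS : Solves N S) :
    Solves N.reciprocal S.reciprocal := by
  rw [Scheme.solves_iff_gain_eq_one] at hS ⊢
  rw [S.reciprocal_gain, hS]
  exact transpose_one

theorem layered_linear_reciprocity_general :
    (∀ S : Scheme N, Solves N S → Solves N.reciprocal S.reciprocal) ∧
    (LinearlySolvable N → LinearlySolvable N.reciprocal) :=
  ⟨fun _ => Solves.reciprocal, fun ⟨S, hS⟩ => ⟨S.reciprocal, hS.reciprocal⟩⟩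

/-- **Linear reciprocity of layered linear deterministic networks.**
If a linear coding scheme `(C_k, F_j, D_k)` linearly solves the `(T+1)`-layered
linear deterministic network `N`, then the scheme `C′_k = D_kᵀ, D′_k = C_kᵀ,
F′_j = F_jᵀ` linearly solves the reciprocal network `N′`.  In particular, if
`N` is linearly solvable then so is its reciprocal. -/
theorem layered_linear_reciprocity [Fact p.Prime]
    (hq : 1 ≤ q) (hT : 1 ≤ T) (hn : 1 ≤ n) (hw : ∀ k, 1 ≤ N.w k) :
    (∀ S : Scheme N, Solves N S → Solves N.reciprocal S.reciprocal) ∧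
    (LinearlySolvable N → LinearlySolvable N.reciprocal) :=
  layered_linear_reciprocity_general
end

section
/- Let N be a (T+1)-layered linear deterministic network over 𝔽_p with a linear coding scheme (C_k, F_j, D_k) and transfer coefficient matrices Γ_{lk}. Equip the reciprocal network N′ with the linear coding scheme C′_k = D_k^T, D′_k = C_k^T, F′_j = F_j^T, and let Γ′_{lk} denote its transfer coefficient matrices. Then Γ′_{lk} = (Γ_{kl})^T for all 1 ≤ l, k ≤ n. -/
open Matrix

variable {p q T n : ℕ} {N : LayeredNetwork p q T n}

/-- The matrix product accumulated along a path `π = (j_0, j_1, …, j_T)`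
(a choice of one node in each layer) up to layer `m`, starting with the
encoding matrix `C_l`:  `pathTransfer m = F_{j_m} · G_{j_{m-1} j_m} ⋯ F_{j_1} ·
G_{j_0 j_1} · C_l` for `1 ≤ m ≤ T - 1` (relay matrices at intermediate layers),
and `pathTransfer T = G_{j_{T-1} j_T} · pathTransfer (T-1)` (no relay matrix at
the destination layer). -/
def pathTransfer (S : Scheme N) (l : Fin n) (π : (m : Fin (T + 1)) → N.V m.val) :
    (m : ℕ) → Matrix (Fin q) (Fin (N.w l)) (ZMod p)
  | 0 => S.C l
  | m + 1 =>
    if h : m + 1 < T then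
      S.F (m + 1) (π ⟨m + 1, by omega⟩) *
          N.G m (π ⟨m, by omega⟩) (π ⟨m + 1, by omega⟩) * pathTransfer S l π m
    else if h' : m + 1 = T then
      N.G m (π ⟨m, by omega⟩) (π ⟨m + 1, by omega⟩) * pathTransfer S l π m
    else
      pathTransfer S l π m

/-- The transfer coefficient matrix `Γ_{lk} ∈ 𝔽_p^{w_k × w_l}`: the sum, over
all sequences of nodes `(j_0, j_1, …, j_T)` with `j_0 = S_l`, `j_m ∈ V_m` and
`j_T = D_k`, of the product
`D_k · G_{j_{T-1} j_T} · F_{j_{T-1}} · G_{j_{T-2} j_{T-1}} ⋯ F_{j_1} · G_{j_0 j_1} · C_l`. -/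
def transferMatrix (S : Scheme N) (l k : Fin n) :
    Matrix (Fin (N.w k)) (Fin (N.w l)) (ZMod p) :=
  ∑ π : (m : Fin (T + 1)) → N.V m.val,
    if π ⟨0, by omega⟩ = N.src l ∧ π (Fin.last T) = N.dst k then
      S.D k * pathTransfer S l π T
    else 0

/-!
Along a fixed path `j_0, …, j_T` the transfer is the alternating product
`D · G · F · G ⋯ F · G · C` of channel and relay matrices. Transposing it reverses
the order of the factors and transposes each of them, which is precisely the product
along the reversed path in the reciprocal network under the reciprocal scheme. Since
path reversal is a bijection between the paths of `N` and those of `N′` that swaps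
the endpoint conditions, the sums agree term by term.
-/

section AlternatingProd

variable {ι R : Type*} [Fintype ι] [CommSemiring R]

/-- `alternatingProd f g m = f m * g (m - 1) * f (m - 1) * ⋯ * f 1 * g 0 * f 0`. -/
def alternatingProd (f g : ℕ → Matrix ι ι R) : ℕ → Matrix ι ι R
  | 0 => f 0
  | m + 1 => f (m + 1) * g m * alternatingProd f g m

theorem alternatingProd_succ' (f g : ℕ → Matrix ι ι R) (m : ℕ) :
    alternatingProd f g (m + 1) =
      alternatingProd (fun i => f (i + 1)) (fun i => g (i + 1)) m * g 0 * f 0 := by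
  induction m with
  | zero => simp only [alternatingProd, Matrix.mul_assoc]
  | succ m ih => rw [alternatingProd, ih, alternatingProd]; simp only [Matrix.mul_assoc]

theorem alternatingProd_congr {f f' g g' : ℕ → Matrix ι ι R} {m : ℕ}
    (hf : ∀ i ≤ m, f i = f' i) (hg : ∀ i < m, g i = g' i) :
    alternatingProd f g m = alternatingProd f' g' m := by
  induction m with
  | zero => exact hf 0 le_rfl
  | succ m ih =>
    rw [alternatingProd, alternatingProd, hf (m + 1) le_rfl, hg m m.lt_succ_self,
      ih (fun i hi => hf i (by omega)) (fun i hi => hg i (by omega))]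

theorem transpose_alternatingProd (f g : ℕ → Matrix ι ι R) (m : ℕ) :
    (alternatingProd f g m)ᵀ =
      alternatingProd (fun i => (f (m - i))ᵀ) (fun i => (g (m - i - 1))ᵀ) m := by
  induction m generalizing f g with
  | zero => rfl
  | succ m ih =>
    rw [alternatingProd, transpose_mul, transpose_mul, ih, alternatingProd_succ']
    simp only [Nat.add_sub_add_right, Nat.sub_zero, Nat.add_sub_cancel, Matrix.mul_assoc]

end AlternatingProd

theorem apply_mk_eq_cast {k : ℕ} {V : ℕ → Type*} (σ : (i : Fin k) → V i) {a b : ℕ}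
    (h : a = b) (ha : a < k) (hb : b < k) : σ ⟨b, hb⟩ = cast (congrArg V h) (σ ⟨a, ha⟩) := by
  subst h; rfl

namespace LayeredNetwork

abbrev Path (N : LayeredNetwork p q T n) : Type :=
  (m : Fin (T + 1)) → N.V m.val

def edgeGain (N : LayeredNetwork p q T n) (σ : N.Path) (m : ℕ) :
    Matrix (Fin q) (Fin q) (ZMod p) :=
  if h : m < T then N.G m (σ ⟨m, by omega⟩) (σ ⟨m + 1, by omega⟩) else 0

def reversePathEquiv (N : LayeredNetwork p q T n) :
    N.Path ≃ N.reciprocal.Path where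
  toFun σ m := σ ⟨T - m, by omega⟩
  invFun π m :=
    cast (congrArg N.V (by have := m.isLt; omega : T - (T - m.val) = m)) (π ⟨T - m, by omega⟩)
  left_inv σ := funext fun m =>
    (apply_mk_eq_cast σ (a := T - (T - m)) (by have := m.isLt; omega) _ m.isLt).symm
  right_inv π := funext fun m =>
    (apply_mk_eq_cast (V := fun i => N.V (T - i)) π (a := T - (T - m))
      (by have := m.isLt; omega) _ m.isLt).symm

theorem reversePathEquiv_endpoints (σ : N.Path) (l k : Fin n) :
    (N.reversePathEquiv σ ⟨0, by omega⟩ = N.reciprocal.src l ∧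
        N.reversePathEquiv σ (Fin.last T) = N.reciprocal.dst k) ↔
      (σ ⟨0, by omega⟩ = N.src k ∧ σ (Fin.last T) = N.dst l) := by
  rw [and_comm]
  refine and_congr ?_ Iff.rfl
  change σ ⟨T - T, _⟩ = cast _ (N.src k) ↔ _
  rw [apply_mk_eq_cast σ (T.sub_self).symm (Nat.zero_lt_succ T), cast_inj]

theorem edgeGain_reciprocal (σ : N.Path) {m : ℕ} (hm : m < T) :
    N.reciprocal.edgeGain (N.reversePathEquiv σ) m = (N.edgeGain σ (T - m - 1))ᵀ := by
  simp only [edgeGain, reciprocal, dif_pos hm, dif_pos (by omega : T - m - 1 < T)]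
  rw [apply_mk_eq_cast σ (by omega : T - m = T - m - 1 + 1) (by omega)]
  rfl

end LayeredNetwork

namespace Scheme

/-- The identity at the source and destination layers, where no relay acts. -/
def relayGain (S : Scheme N) (σ : N.Path) (m : ℕ) :
    Matrix (Fin q) (Fin q) (ZMod p) :=
  if h : 0 < m ∧ m < T then S.F m (σ ⟨m, by omega⟩) else 1

theorem relayGain_reciprocal (S : Scheme N) (σ : N.Path) (m : ℕ) :
    S.reciprocal.relayGain (N.reversePathEquiv σ) m = (S.relayGain σ (T - m))ᵀ := by
  by_cases hm : 0 < m ∧ m < T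
  · rw [relayGain, relayGain, dif_pos hm, dif_pos (by omega)]
    rfl
  · rw [relayGain, relayGain, dif_neg hm, dif_neg (by omega), transpose_one]

theorem pathTransfer_eq_alternatingProd (S : Scheme N) (l : Fin n)
    (σ : N.Path) {m : ℕ} (hm : m ≤ T) :
    pathTransfer S l σ m = alternatingProd (S.relayGain σ) (N.edgeGain σ) m * S.C l := by
  induction m with
  | zero =>
    rw [alternatingProd, relayGain, dif_neg fun h => lt_irrefl 0 h.1, Matrix.one_mul]
    rfl
  | succ m ih =>
    rw [pathTransfer, alternatingProd, relayGain, LayeredNetwork.edgeGain,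
      dif_pos (by omega : m < T), ih (by omega)]
    by_cases hlast : m + 1 < T
    · rw [dif_pos hlast, dif_pos ⟨m.succ_pos, hlast⟩]
      simp only [Matrix.mul_assoc]
    · rw [dif_neg hlast, dif_pos (by omega), dif_neg fun h => hlast h.2, Matrix.one_mul,
      Matrix.mul_assoc]

theorem alternatingProd_reciprocal (S : Scheme N) (σ : N.Path) :
    alternatingProd (S.reciprocal.relayGain (N.reversePathEquiv σ))
        (N.reciprocal.edgeGain (N.reversePathEquiv σ)) T =
      (alternatingProd (S.relayGain σ) (N.edgeGain σ) T)ᵀ := by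
  rw [transpose_alternatingProd]
  exact alternatingProd_congr (fun i _ => S.relayGain_reciprocal σ i)
    (fun i hi => N.edgeGain_reciprocal σ hi)

theorem decode_pathTransfer_reciprocal (S : Scheme N) (l k : Fin n)
    (σ : N.Path) :
    S.reciprocal.D k * pathTransfer S.reciprocal l (N.reversePathEquiv σ) T =
      (S.D l * pathTransfer S k σ T)ᵀ := by
  rw [pathTransfer_eq_alternatingProd _ _ _ le_rfl, pathTransfer_eq_alternatingProd _ _ _ le_rfl,
    alternatingProd_reciprocal, transpose_mul, transpose_mul]
  exact (Matrix.mul_assoc _ _ _).symm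

end Scheme

theorem transferMatrix_reciprocal_eq_transpose_general (S : Scheme N) (l k : Fin n) :
    transferMatrix S.reciprocal l k = (transferMatrix S k l)ᵀ := by
  rw [transferMatrix, transferMatrix, transpose_sum]
  refine (Fintype.sum_equiv N.reversePathEquiv _ _ fun σ => ?_).symm
  rw [apply_ite transpose, transpose_zero, ← S.decode_pathTransfer_reciprocal]
  exact if_congr (N.reversePathEquiv_endpoints σ l k).symm rfl rfl

/-- **The transfer matrices of the reciprocal scheme are the transposes of the
transfer matrices of the original scheme.**  If the reciprocal network `N′` is
equipped with the linear coding scheme `C′_k = D_kᵀ, D′_k = C_kᵀ, F′_j = F_jᵀ`,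
then its transfer coefficient matrices satisfy `Γ′_{lk} = (Γ_{kl})ᵀ` for all
`l, k`. -/
theorem transferMatrix_reciprocal_eq_transpose [Fact p.Prime]
    (hq : 1 ≤ q) (hT : 1 ≤ T) (hn : 1 ≤ n) (hw : ∀ k, 1 ≤ N.w k)
    (S : Scheme N) (l k : Fin n) :
    transferMatrix S.reciprocal l k = (transferMatrix S k l)ᵀ :=
  transferMatrix_reciprocal_eq_transpose_general S l k
end

section
/- Let N be a (T+1)-layered linear deterministic network over 𝔽_p in which every channel gain matrix is a shift matrix, G_{ij} = S^{q−g_{ij}} with 0 ≤ g_{ij} ≤ q. Define the physical reciprocal network N″ to have the same layers in reversed order, the SAME channel gain matrix G″_{ji} = G_{ij} on each reversed edge, and messages with sources and destinations swapped. If the (transposed) reciprocal network N′ (which has G′_{ji} = G_{ij}^T) is linearly solved by a scheme (C′_k, F′_j, D′_k), then N″ is linearly solved by the flipped scheme (J C′_k, J F′_j J, D′_k J), where J is the q×q exchange matrix. In particular N″ is linearly solvable whenever N′ is. -/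
open Matrix

variable {p q T n : ℕ} {N : LayeredNetwork p q T n}

/-- The `r × r` down-shift matrix over `𝔽_p`: `S i j = 1` if `i = j + 1` and
`0` otherwise. -/
def downShift (p r : ℕ) : Matrix (Fin r) (Fin r) (ZMod p) :=
  Matrix.of fun i j => if (i : ℕ) = (j : ℕ) + 1 then 1 else 0

/-- The `r × r` exchange (flip) matrix over `𝔽_p`: `J i j = 1` iff
`i + j + 1 = r` (one-based: `J_{ij} = 1` iff `i + j = r + 1`). -/
def exchange (p r : ℕ) : Matrix (Fin r) (Fin r) (ZMod p) :=
  Matrix.of fun i j => if (i : ℕ) + (j : ℕ) + 1 = r then 1 else 0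

/-- The *physical* reciprocal network `N″`: the layers in reversed order,
the **same** channel gain matrix `G″_{ji} = G_{ij}` on each reversed edge
(no transpose), and the roles of sources and destinations swapped. -/
def LayeredNetwork.physicalReciprocal (N : LayeredNetwork p q T n) :
    LayeredNetwork p q T n where
  V := fun m => N.V (T - m)
  fintypeV := fun m => N.fintypeV (T - m)
  decEqV := fun m => N.decEqV (T - m)
  G := fun m j i =>
    if h : m < T then
      N.G (T - m - 1) i (cast (congrArg N.V (by omega : T - m = T - m - 1 + 1)) j)
    else 0
  w := N.w
  src := N.dst
  dst := fun k => cast (congrArg N.V (by omega : (0 : ℕ) = T - T)) (N.src k)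

/-- The flipped scheme `(J C′_k, J F′_j J, D′_k J)`: every node flips its
vector before transmitting and flips the vector it receives before coding. -/
def flipScheme (S' : Scheme N.reciprocal) : Scheme N.physicalReciprocal where
  C := fun k => exchange p q * S'.C k
  F := fun m j => exchange p q * S'.F m j * exchange p q
  D := fun k => S'.D k * exchange p q

/-! The exchange matrix `J` is an involution that conjugates the down-shift `S` to its transpose,
`S J = J Sᵀ`, and hence every power of `S` too. So when the nodes of `N″` flip every vector they
receive and every vector they send, each signal of `N″` is, layer by layer, `J` times the
corresponding signal of `N′`, and the decoders `D′_k J` undo the last flip. -/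

namespace Matrix

/-- `A` is symmetric about its anti-diagonal. -/
def IsPersymmetric (A : Matrix (Fin q) (Fin q) (ZMod p)) : Prop :=
  A * exchange p q = exchange p q * Aᵀ

end Matrix

open Matrix

theorem exchange_eq_submatrix_one :
    exchange p q = (1 : Matrix (Fin q) (Fin q) (ZMod p)).submatrix Fin.rev id := by
  ext i j
  simp only [exchange, of_apply, submatrix_apply, id, one_apply, Fin.ext_iff, Fin.val_rev]
  congr 1
  apply propext
  omega

theorem mul_exchange (A : Matrix (Fin q) (Fin q) (ZMod p)) :
    A * exchange p q = A.submatrix id Fin.rev := by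
  rw [exchange_eq_submatrix_one]
  exact mul_submatrix_one Fin.revPerm id A

theorem exchange_mul (A : Matrix (Fin q) (Fin q) (ZMod p)) :
    exchange p q * A = A.submatrix Fin.rev id := by
  rw [exchange_eq_submatrix_one]
  exact one_submatrix_mul Fin.rev (Equiv.refl _) A

theorem exchange_mul_exchange : exchange p q * exchange p q = 1 := by
  rw [exchange_mul, exchange_eq_submatrix_one, submatrix_submatrix, Fin.rev_involutive.comp_self]
  exact submatrix_id_id 1

theorem isPersymmetric_downShift : (downShift p q).IsPersymmetric := by
  rw [IsPersymmetric, mul_exchange, exchange_mul]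
  ext i j
  simp only [downShift, submatrix_apply, id, transpose_apply, of_apply, Fin.val_rev]
  congr 1
  apply propext
  omega

theorem Matrix.IsPersymmetric.pow {A : Matrix (Fin q) (Fin q) (ZMod p)} (hA : A.IsPersymmetric)
    (e : ℕ) : (A ^ e).IsPersymmetric := by
  induction e with
  | zero => simp [IsPersymmetric]
  | succ e ih =>
    calc A ^ (e + 1) * exchange p q = A * (A ^ e * exchange p q) := by rw [pow_succ', mul_assoc]
      _ = exchange p q * (A ^ (e + 1))ᵀ := by
        rw [ih, ← mul_assoc, hA, mul_assoc, ← transpose_mul, ← pow_succ]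

theorem Matrix.IsPersymmetric.mulVec_exchange_mulVec {A : Matrix (Fin q) (Fin q) (ZMod p)}
    (hA : A.IsPersymmetric) (v : Fin q → ZMod p) :
    A *ᵥ (exchange p q *ᵥ v) = exchange p q *ᵥ (Aᵀ *ᵥ v) := by
  rw [mulVec_mulVec, mulVec_mulVec, hA]

theorem exchange_conj_mulVec_exchange_mulVec (A : Matrix (Fin q) (Fin q) (ZMod p))
    (v : Fin q → ZMod p) :
    (exchange p q * A * exchange p q) *ᵥ (exchange p q *ᵥ v) = exchange p q *ᵥ (A *ᵥ v) := by
  rw [mulVec_mulVec, mul_assoc _ (exchange p q), exchange_mul_exchange, mul_one, mulVec_mulVec]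

theorem LayeredNetwork.reciprocal_G_s7 (m : ℕ) (a : N.reciprocal.V m) (b : N.reciprocal.V (m + 1)) :
    N.reciprocal.G m a b = (N.physicalReciprocal.G m a b)ᵀ := by
  simp only [LayeredNetwork.reciprocal, LayeredNetwork.physicalReciprocal]
  split_ifs <;> simp

theorem LayeredNetwork.physicalReciprocal_G_isPersymmetric
    (hN : ∀ m < T, ∀ i j, (N.G m i j).IsPersymmetric) (m : ℕ) (a : N.physicalReciprocal.V m)
    (b : N.physicalReciprocal.V (m + 1)) : (N.physicalReciprocal.G m a b).IsPersymmetric := by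
  simp only [LayeredNetwork.physicalReciprocal]
  split_ifs
  · exact hN _ (by omega) _ _
  · simp [IsPersymmetric]

section FlipScheme

variable (hN : ∀ m a b, (N.physicalReciprocal.G m a b).IsPersymmetric)
  (S' : Scheme N.reciprocal) (W : Msg N.reciprocal)
include hN

theorem ySig_flipScheme_succ {m : ℕ}
    (hx : ∀ i, xSig (flipScheme S') W m i = exchange p q *ᵥ xSig S' W m i)
    (j : N.physicalReciprocal.V (m + 1)) :
    ySig (flipScheme S') W (m + 1) j = exchange p q *ᵥ ySig S' W (m + 1) j := by
  change ∑ i, N.physicalReciprocal.G m i j *ᵥ xSig (flipScheme S') W m i =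
    exchange p q *ᵥ ∑ i, N.reciprocal.G m i j *ᵥ xSig S' W m i
  rw [mulVec_sum]
  refine Finset.sum_congr rfl fun i _ => ?_
  calc N.physicalReciprocal.G m i j *ᵥ xSig (flipScheme S') W m i
      = N.physicalReciprocal.G m i j *ᵥ (exchange p q *ᵥ xSig S' W m i) := congrArg _ (hx i)
    _ = exchange p q *ᵥ ((N.physicalReciprocal.G m i j)ᵀ *ᵥ xSig S' W m i) :=
      (hN m i j).mulVec_exchange_mulVec _
    _ = exchange p q *ᵥ (N.reciprocal.G m i j *ᵥ xSig S' W m i) :=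
      congrArg (fun A => exchange p q *ᵥ (A *ᵥ xSig S' W m i)) (N.reciprocal_G_s7 m i j).symm

theorem xSig_flipScheme (m : ℕ) (j : N.physicalReciprocal.V m) :
    xSig (flipScheme S') W m j = exchange p q *ᵥ xSig S' W m j := by
  induction m with
  | zero =>
    simp only [xSig, mulVec_sum, apply_ite, mulVec_zero]
    refine Finset.sum_congr rfl fun k _ => ?_
    -- the two conditions are `N″.src k = j` and `N′.src k = j`, equal only up to unfolding
    split_ifs with hphys hrecip hrecip
    · exact (mulVec_mulVec _ _ _).symm
    · exact absurd hphys hrecip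
    · exact absurd hrecip hphys
    · rfl
  | succ m ih =>
    exact (congrArg _ (ySig_flipScheme_succ hN S' W ih j)).trans
      (exchange_conj_mulVec_exchange_mulVec _ _)

theorem ySig_flipScheme (m : ℕ) (j : N.physicalReciprocal.V m) :
    ySig (flipScheme S') W m j = exchange p q *ᵥ ySig S' W m j := by
  cases m with
  | zero => exact (mulVec_zero _).symm
  | succ m => exact ySig_flipScheme_succ hN S' W (xSig_flipScheme hN S' W m) j

theorem decode_flipScheme (k : Fin n) : decode (flipScheme S') W k = decode S' W k :=
  calc (S'.D k * exchange p q) *ᵥ ySig (flipScheme S') W T (N.physicalReciprocal.dst k)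
      = (S'.D k * exchange p q) *ᵥ (exchange p q *ᵥ ySig S' W T (N.reciprocal.dst k)) :=
        congrArg _ (ySig_flipScheme hN S' W T _)
    _ = S'.D k *ᵥ ySig S' W T (N.reciprocal.dst k) := by
      rw [mulVec_mulVec, Matrix.mul_assoc, exchange_mul_exchange, Matrix.mul_one]

theorem Solves.flipScheme (hS : Solves N.reciprocal S') :
    Solves N.physicalReciprocal (flipScheme S') :=
  fun W k => (decode_flipScheme hN S' W k).trans (hS W k)

end FlipScheme

theorem physical_reciprocity_of_shift_network_general
    (g : (m : ℕ) → N.V m → N.V (m + 1) → ℕ)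
    (hshift : ∀ m, m < T → ∀ i j, N.G m i j = downShift p q ^ (q - g m i j)) :
    (∀ S' : Scheme N.reciprocal,
        Solves N.reciprocal S' → Solves N.physicalReciprocal (flipScheme S')) ∧
    (LinearlySolvable N.reciprocal → LinearlySolvable N.physicalReciprocal) := by
  have hN := N.physicalReciprocal_G_isPersymmetric fun m hm i j =>
    hshift m hm i j ▸ isPersymmetric_downShift.pow _
  exact ⟨fun S' hS => hS.flipScheme hN, fun ⟨S', hS⟩ => ⟨flipScheme S', hS.flipScheme hN⟩⟩

/-- **Physical reciprocity of shift linear deterministic networks.**  Suppose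
every channel gain matrix of `N` is a shift matrix `G_{ij} = S^{q - g_{ij}}`
with `0 ≤ g_{ij} ≤ q`.  If the (transposed) reciprocal network `N′` (with
`G′_{ji} = G_{ij}ᵀ`) is linearly solved by a scheme `(C′_k, F′_j, D′_k)`, then
the physical reciprocal network `N″` (with `G″_{ji} = G_{ij}`) is linearly
solved by the flipped scheme `(J C′_k, J F′_j J, D′_k J)`.  In particular `N″`
is linearly solvable whenever `N′` is. -/
theorem physical_reciprocity_of_shift_network [Fact p.Prime]
    (hq : 1 ≤ q) (hT : 1 ≤ T) (hn : 1 ≤ n) (hw : ∀ k, 1 ≤ N.w k)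
    (g : (m : ℕ) → N.V m → N.V (m + 1) → ℕ)
    (hgle : ∀ m, m < T → ∀ i j, g m i j ≤ q)
    (hshift : ∀ m, m < T → ∀ i j, N.G m i j = downShift p q ^ (q - g m i j)) :
    (∀ S' : Scheme N.reciprocal,
        Solves N.reciprocal S' → Solves N.physicalReciprocal (flipScheme S')) ∧
    (LinearlySolvable N.reciprocal → LinearlySolvable N.physicalReciprocal) :=
  physical_reciprocity_of_shift_network_general g hshift
end

section
/- Let N be a linear deterministic network over 𝔽_p on a finite directed graph with channel gain matrices G_{ij} ∈ 𝔽_p^{q×q} on its edges, with n unicast messages of lengths w_k, and suppose N is solvable over T time steps by a causal linear coding scheme. Then the reciprocal network N′ — obtained by reversing every edge, assigning channel gain matrix G′_{ji} = G_{ij}^T to each reversed edge, and swapping the source and destination node of every message — is also solvable over T time steps by a causal linear coding scheme. -/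
/-!
Stack all signals of a `T`-step scheme into vectors indexed by slots (time, node, coordinate).
The channel becomes a matrix `G`, block diagonal in time, and the scheme becomes matrices `A`
(relaying; strictly lower triangular in time by causality), `B` (encoding) and `D` (decoding).
The transmitted signals satisfy `x = A G x + B W`, and `A G` is nilpotent of order `T`, so the
decoded messages are `M W` with `M = D G (∑_{i<T} (A G)^i) B`; the scheme solves the network
iff `M = 1`. For the reciprocal network, run the transposed matrices backwards in time: the
gain matrix of `N′` is `Gᵀ` conjugated by time reversal, and the transpose of a strictly lower
triangular matrix conjugated by time reversal is again strictly lower triangular, so relaying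
with `Aᵀ`, encoding with `Dᵀ` and decoding with `Bᵀ` is causal. Its end-to-end matrix is
`Bᵀ Gᵀ (∑_{i<T} (Aᵀ Gᵀ)^i) Dᵀ = Mᵀ = 1`.
-/

open Matrix

/-- A linear deterministic network over `𝔽_p = ZMod p` on a finite directed
graph `(V, E)`: a channel gain matrix `G i j ∈ 𝔽_p^{q×q}` for every edge
`(i, j) ∈ E`, and `n` unicast messages, message `k` having length `w k`,
source node `src k` and destination node `dst k`. -/
structure GenNetwork (p q n : ℕ) where
  V : Type
  fintypeV : Fintype V
  decEqV : DecidableEq V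
  E : V → V → Prop
  decE : DecidableRel E
  G : V → V → Matrix (Fin q) (Fin q) (ZMod p)
  w : Fin n → ℕ
  src : Fin n → V
  dst : Fin n → V

attribute [instance] GenNetwork.fintypeV GenNetwork.decEqV GenNetwork.decE

variable {p q n : ℕ}

/-- A causal linear coding scheme over `T` time steps (`T` is implicit in the
range of time indices actually used, `0, …, T-1`): at time `m` node `j`
transmits `x_j[m] = ∑_{m' < m} A j m m' · y_j[m'] + ∑_{k : src k = j} B j m k · W_k`,
a fixed linear function of its previously received signals and of the messages
available at it; destination `k` forms the estimate
`Ŵ_k = ∑_{m < T} D k m · y_{dst k}[m]`, a fixed linear function of its received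
signals. -/
structure CausalScheme (p q n : ℕ) (N : GenNetwork p q n) where
  A : N.V → ℕ → ℕ → Matrix (Fin q) (Fin q) (ZMod p)
  B : N.V → ℕ → (k : Fin n) → Matrix (Fin q) (Fin (N.w k)) (ZMod p)
  D : (k : Fin n) → ℕ → Matrix (Fin (N.w k)) (Fin q) (ZMod p)

variable {N : GenNetwork p q n}

/-- A tuple of messages `W k ∈ 𝔽_p^{w k}`. -/
def GMsg (N : GenNetwork p q n) : Type :=
  (k : Fin n) → Fin (N.w k) → ZMod p

/-- The signal `x_j[m]` transmitted by node `j` at time `m`: a fixed (causal)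
linear function of the signals `y_j[0], …, y_j[m-1]` received so far, where
`y_j[m'] = ∑_{i : (i,j) ∈ E} G i j · x_i[m']`, and of the messages `W_k` with
`src k = j`. -/
def gxSig (S : CausalScheme p q n N) (W : GMsg N) : ℕ → N.V → (Fin q → ZMod p)
  | m, j =>
    (∑ t : Fin m,
        (S.A j m t.val).mulVec
          (∑ i : N.V, if N.E i j then (N.G i j).mulVec (gxSig S W t.val i) else 0)) +
      ∑ k : Fin n, if N.src k = j then (S.B j m k).mulVec (W k) else 0
  termination_by m _ => m
  decreasing_by exact t.isLt

/-- The signal `y_j[m] = ∑_{i : (i,j) ∈ E} G i j · x_i[m]` received by node `j`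
at time `m`. -/
def gySig (S : CausalScheme p q n N) (W : GMsg N) (m : ℕ) (j : N.V) :
    Fin q → ZMod p :=
  ∑ i : N.V, if N.E i j then (N.G i j).mulVec (gxSig S W m i) else 0

/-- The estimate `Ŵ_k = ∑_{m < T} D k m · y_{dst k}[m]` formed by the
destination of message `k` from the signals it received during time steps
`0, …, T-1`. -/
def gdecode (T : ℕ) (S : CausalScheme p q n N) (W : GMsg N) (k : Fin n) :
    Fin (N.w k) → ZMod p :=
  ∑ m : Fin T, (S.D k m.val).mulVec (gySig S W m.val (N.dst k))

/-- The causal linear scheme solves the network over `T` time steps: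
`Ŵ_k = W_k` for every message index `k` and every choice of messages. -/
def GSolves (T : ℕ) (N : GenNetwork p q n) (S : CausalScheme p q n N) : Prop :=
  ∀ (W : GMsg N) (k : Fin n), gdecode T S W k = W k

/-- The network is solvable over `T` time steps by a causal linear coding scheme. -/
def GLinearlySolvable (T : ℕ) (N : GenNetwork p q n) : Prop :=
  ∃ S : CausalScheme p q n N, GSolves T N S

/-- The reciprocal network `N′`: every edge is reversed, the channel gain
matrix on each reversed edge is the transpose of the original one
(`G′ j i = (G i j)ᵀ`), and the source and destination node of every message
are swapped. -/
def GenNetwork.reciprocal (N : GenNetwork p q n) : GenNetwork p q n where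
  V := N.V
  fintypeV := N.fintypeV
  decEqV := N.decEqV
  E := fun i j => N.E j i
  decE := fun i j => N.decE j i
  G := fun i j => (N.G j i)ᵀ
  w := N.w
  src := N.dst
  dst := fun k => N.src k

open Finset

namespace Matrix

variable {ι ι' κ κ' R : Type*} [Fintype ι] [DecidableEq ι] [Fintype ι'] [DecidableEq ι']

theorem pow_apply_eq_zero_of_lt_add [Semiring R] (f : ι → ℕ) {M : Matrix ι ι R}
    (hM : ∀ u v, M u v ≠ 0 → f v < f u) (k : ℕ) {u v : ι} (huv : f u < f v + k) :
    (M ^ k) u v = 0 := by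
  induction k generalizing u with
  | zero => exact one_apply_ne (by rintro rfl; omega)
  | succ k ih =>
    rw [pow_succ', mul_apply]
    refine sum_eq_zero fun x _ => ?_
    by_cases hx : M u x = 0
    · rw [hx, zero_mul]
    · rw [ih (by have := hM u x hx; omega), mul_zero]

theorem pow_eq_zero_of_apply_ne_zero_lt {T : ℕ} [Semiring R] (f : ι → Fin T)
    {M : Matrix ι ι R} (hM : ∀ u v, M u v ≠ 0 → f v < f u) : M ^ T = 0 := by
  ext u v
  exact pow_apply_eq_zero_of_lt_add (fun u => (f u : ℕ)) hM T (by have := (f u).isLt; omega)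

theorem eq_geom_sum_mulVec_of_eq_mulVec_add [Ring R] {T : ℕ} {M : Matrix ι ι R}
    (hM : M ^ T = 0) {x b : ι → R} (hx : x = M *ᵥ x + b) :
    x = (∑ i ∈ range T, M ^ i) *ᵥ b := by
  have hb : b = (1 - M) *ᵥ x := by
    rw [sub_mulVec, one_mulVec]; exact eq_sub_of_add_eq' hx.symm
  rw [hb, mulVec_mulVec, geom_sum_mul_neg, hM, sub_zero, one_mulVec]

/-- The input-output map `w ↦ D (G x)` of the feedback loop `x = A (G x) + B w`, when `A G` is
nilpotent of order `T` (see `mulVec_mulVec_eq_feedbackTransfer_mulVec`). -/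
def feedbackTransfer [Semiring R] (T : ℕ) (D : Matrix κ ι R) (G A : Matrix ι ι R)
    (B : Matrix ι κ' R) : Matrix κ κ' R :=
  D * G * (∑ i ∈ range T, (A * G) ^ i) * B

theorem transpose_feedbackTransfer [CommSemiring R] (T : ℕ) (D : Matrix κ ι R)
    (G A : Matrix ι ι R) (B : Matrix ι κ' R) :
    (feedbackTransfer T D G A B)ᵀ = feedbackTransfer T Bᵀ Gᵀ Aᵀ Dᵀ := by
  have hcomm :
      (∑ i ∈ range T, (Gᵀ * Aᵀ) ^ i) * Gᵀ = Gᵀ * ∑ i ∈ range T, (Aᵀ * Gᵀ) ^ i := by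
    rw [sum_mul, mul_sum]
    exact sum_congr rfl fun i _ => mul_pow_mul _ _ i
  simp only [feedbackTransfer, transpose_mul, transpose_sum, transpose_pow]
  rw [← Matrix.mul_assoc _ Gᵀ, hcomm]
  simp only [Matrix.mul_assoc]

theorem feedbackTransfer_submatrix [Semiring R] (T : ℕ) (e : ι' ≃ ι) (D : Matrix κ ι R)
    (G A : Matrix ι ι R) (B : Matrix ι κ' R) :
    feedbackTransfer T (D.submatrix id e) (G.submatrix e e) (A.submatrix e e)
      (B.submatrix e id) = feedbackTransfer T D G A B := by
  have hsum : ∑ i ∈ range T, (A.submatrix e e * G.submatrix e e) ^ i =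
      (∑ i ∈ range T, (A * G) ^ i).submatrix e e := by
    have := map_sum (reindexRingEquiv R e.symm) (fun i => (A * G) ^ i) (range T)
    simp only [map_pow, map_mul, coe_reindexRingEquiv, reindex_apply, Equiv.symm_symm] at this
    exact this.symm
  rw [feedbackTransfer, hsum, submatrix_mul_equiv, submatrix_mul_equiv, submatrix_mul_equiv,
    submatrix_id_id, feedbackTransfer]

theorem mulVec_mulVec_eq_feedbackTransfer_mulVec [Ring R] [Fintype κ'] {T : ℕ}
    (D : Matrix κ ι R) {G A : Matrix ι ι R} (B : Matrix ι κ' R) (hAG : (A * G) ^ T = 0)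
    {x : ι → R} {w : κ' → R} (hx : x = A *ᵥ (G *ᵥ x) + B *ᵥ w) :
    D *ᵥ (G *ᵥ x) = feedbackTransfer T D G A B *ᵥ w := by
  rw [mulVec_mulVec] at hx
  rw [eq_geom_sum_mulVec_of_eq_mulVec_add hAG hx, feedbackTransfer]
  simp only [mulVec_mulVec, Matrix.mul_assoc]

end Matrix

theorem Fin.sum_univ_ite_lt {M : Type*} [AddCommMonoid M] {T : ℕ} (m : Fin T) (f : ℕ → M) :
    ∑ t : Fin T, (if t < m then f t else 0) = ∑ t : Fin m, f t := by
  simp only [Fin.lt_def]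
  rw [Fin.sum_univ_eq_sum_range f,
    Fin.sum_univ_eq_sum_range (fun t => if t < (m : ℕ) then f t else 0), ← sum_filter]
  congr 1
  ext t
  simp only [mem_filter, mem_range]
  omega

namespace GenNetwork

variable (N) (T : ℕ)

/-- `(m, j, a)` indexes coordinate `a` of the signal of node `j` at time `m`. -/
abbrev Slot : Type := Fin T × N.V × Fin q

abbrev MsgCoord : Type := Σ k : Fin n, Fin (N.w k)

def gainMatrix : Matrix (N.Slot T) (N.Slot T) (ZMod p) :=
  fun u v => if v.1 = u.1 ∧ N.E v.2.1 u.2.1 then N.G v.2.1 u.2.1 u.2.2 v.2.2 else 0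

@[simps]
def msgEquiv : GMsg N ≃ (N.MsgCoord → ZMod p) where
  toFun W κ := W κ.1 κ.2
  invFun v k c := v ⟨k, c⟩
  left_inv _ := rfl
  right_inv _ := rfl

def slotRev : N.Slot T ≃ N.Slot T :=
  Fin.revPerm.prodCongr (Equiv.refl _)

theorem gainMatrix_reciprocal :
    N.reciprocal.gainMatrix T = (N.gainMatrix T)ᵀ.submatrix (N.slotRev T) (N.slotRev T) := by
  ext (⟨m, j, a⟩ : N.Slot T) (⟨t, i, b⟩ : N.Slot T)
  simp [gainMatrix, reciprocal, slotRev, eq_comm]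

end GenNetwork

namespace CausalScheme

variable (S : CausalScheme p q n N) (T : ℕ)

def relayMatrix : Matrix (N.Slot T) (N.Slot T) (ZMod p) :=
  fun u v => if v.2.1 = u.2.1 ∧ v.1 < u.1 then S.A u.2.1 u.1 v.1 u.2.2 v.2.2 else 0

def encoderMatrix : Matrix (N.Slot T) N.MsgCoord (ZMod p) :=
  fun u κ => if N.src κ.1 = u.2.1 then S.B u.2.1 u.1 κ.1 u.2.2 κ.2 else 0

def decoderMatrix : Matrix N.MsgCoord (N.Slot T) (ZMod p) :=
  fun κ u => if N.dst κ.1 = u.2.1 then S.D κ.1 u.1 κ.2 u.2.2 else 0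

def transferMatrix : Matrix N.MsgCoord N.MsgCoord (ZMod p) :=
  feedbackTransfer T (S.decoderMatrix T) (N.gainMatrix T) (S.relayMatrix T) (S.encoderMatrix T)

def sentVec (W : GMsg N) : N.Slot T → ZMod p := fun u => gxSig S W u.1 u.2.1 u.2.2

def receivedVec (W : GMsg N) : N.Slot T → ZMod p := fun u => gySig S W u.1 u.2.1 u.2.2

section Signals

variable {S T} {W : GMsg N}

theorem gainMatrix_mulVec_sentVec : N.gainMatrix T *ᵥ S.sentVec T W = S.receivedVec T W := by
  funext u
  simp [mulVec, dotProduct, GenNetwork.gainMatrix, sentVec, receivedVec, gySig,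
    Fintype.sum_prod_type, ite_and, Finset.sum_apply, ite_apply]

theorem decoderMatrix_mulVec_receivedVec :
    S.decoderMatrix T *ᵥ S.receivedVec T W = N.msgEquiv (gdecode T S W) := by
  funext ⟨k, c⟩
  change _ = gdecode T S W k c
  simp [mulVec, dotProduct, decoderMatrix, receivedVec, gdecode, Fintype.sum_prod_type,
    Finset.sum_apply]

theorem relayMatrix_mulVec_receivedVec (u : N.Slot T) :
    (S.relayMatrix T *ᵥ S.receivedVec T W) u =
      ∑ t : Fin u.1, (S.A u.2.1 u.1 t *ᵥ gySig S W t u.2.1) u.2.2 := by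
  rw [← Fin.sum_univ_ite_lt u.1 fun t => (S.A u.2.1 u.1 t *ᵥ gySig S W t u.2.1) u.2.2]
  simp [mulVec, dotProduct, relayMatrix, receivedVec, Fintype.sum_prod_type, ite_and]

theorem encoderMatrix_mulVec_msgEquiv (u : N.Slot T) :
    (S.encoderMatrix T *ᵥ N.msgEquiv W) u =
      (∑ k : Fin n, if N.src k = u.2.1 then S.B u.2.1 u.1 k *ᵥ W k else 0) u.2.2 := by
  simp [mulVec, dotProduct, encoderMatrix, Finset.sum_apply, ite_apply, Fintype.sum_sigma]

theorem sentVec_eq : S.sentVec T W =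
    S.relayMatrix T *ᵥ S.receivedVec T W + S.encoderMatrix T *ᵥ N.msgEquiv W := by
  funext u
  rw [Pi.add_apply, relayMatrix_mulVec_receivedVec, encoderMatrix_mulVec_msgEquiv, sentVec, gxSig,
    Pi.add_apply, Finset.sum_apply]
  rfl

theorem relayMatrix_mul_gainMatrix_pow_eq_zero : (S.relayMatrix T * N.gainMatrix T) ^ T = 0 := by
  refine pow_eq_zero_of_apply_ne_zero_lt Prod.fst fun u v huv => ?_
  obtain ⟨x, -, hx⟩ := exists_ne_zero_of_sum_ne_zero huv
  have hrelay := (ite_ne_right_iff.mp (left_ne_zero_of_mul hx)).1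
  have hgain := (ite_ne_right_iff.mp (right_ne_zero_of_mul hx)).1
  exact hgain.1 ▸ hrelay.2

theorem msgEquiv_gdecode : N.msgEquiv (gdecode T S W) = S.transferMatrix T *ᵥ N.msgEquiv W := by
  rw [← decoderMatrix_mulVec_receivedVec, ← gainMatrix_mulVec_sentVec]
  refine mulVec_mulVec_eq_feedbackTransfer_mulVec _ _ relayMatrix_mul_gainMatrix_pow_eq_zero ?_
  rw [gainMatrix_mulVec_sentVec]
  exact sentVec_eq

end Signals

theorem gSolves_iff_transferMatrix_eq_one : GSolves T N S ↔ S.transferMatrix T = 1 := by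
  rw [ext_iff_mulVec, N.msgEquiv.symm.forall_congr_left]
  simp only [Equiv.symm_symm, one_mulVec, ← msgEquiv_gdecode]
  exact forall_congr' fun W => funext_iff.symm.trans N.msgEquiv.apply_eq_iff_eq.symm

def reverse : CausalScheme p q n N.reciprocal where
  A j m t := (S.A j (T - (t + 1)) (T - (m + 1)))ᵀ
  B _ m k := (S.D k (T - (m + 1)))ᵀ
  D k m := (S.B (N.src k) (T - (m + 1)) k)ᵀ

theorem relayMatrix_reverse :
    (S.reverse T).relayMatrix T = (S.relayMatrix T)ᵀ.submatrix (N.slotRev T) (N.slotRev T) := by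
  ext (⟨m, j, a⟩ : N.Slot T) (⟨t, i, b⟩ : N.Slot T)
  simp only [relayMatrix, reverse, GenNetwork.slotRev, submatrix_apply, transpose_apply,
    Equiv.prodCongr_apply, Prod.map, Fin.revPerm_apply, Equiv.refl_apply, Fin.rev_lt_rev,
    Fin.val_rev]
  by_cases hij : i = j
  · subst hij; rfl
  · rw [if_neg (hij ·.1), if_neg (hij ·.1.symm)]

theorem encoderMatrix_reverse :
    (S.reverse T).encoderMatrix T = (S.decoderMatrix T)ᵀ.submatrix (N.slotRev T) id := by
  ext (⟨m, j, a⟩ : N.Slot T) ⟨k, c⟩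
  simp only [encoderMatrix, reverse, GenNetwork.reciprocal, GenNetwork.slotRev,
    submatrix_apply, Equiv.prodCongr_apply, Prod.map, Fin.revPerm_apply, id]
  rfl

theorem decoderMatrix_reverse :
    (S.reverse T).decoderMatrix T = (S.encoderMatrix T)ᵀ.submatrix id (N.slotRev T) := by
  ext ⟨k, c⟩ (⟨m, j, a⟩ : N.Slot T)
  simp only [decoderMatrix, reverse, GenNetwork.reciprocal, GenNetwork.slotRev,
    submatrix_apply, Equiv.prodCongr_apply, Prod.map, Fin.revPerm_apply, id]
  by_cases hj : N.src k = j
  · subst hj; rfl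
  · exact (if_neg hj).trans (if_neg hj).symm

theorem transferMatrix_reverse : (S.reverse T).transferMatrix T = (S.transferMatrix T)ᵀ := by
  rw [transferMatrix, GenNetwork.gainMatrix_reciprocal, relayMatrix_reverse, encoderMatrix_reverse,
    decoderMatrix_reverse, transferMatrix, transpose_feedbackTransfer]
  exact feedbackTransfer_submatrix T (N.slotRev T) _ _ _ _

end CausalScheme

theorem gen_linear_reciprocity_general {T : ℕ}
    (h : GLinearlySolvable T N) :
    GLinearlySolvable T N.reciprocal := by
  obtain ⟨S, hS⟩ := h
  refine ⟨S.reverse T, ?_⟩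
  rw [CausalScheme.gSolves_iff_transferMatrix_eq_one, S.transferMatrix_reverse,
    (S.gSolves_iff_transferMatrix_eq_one T).mp hS]
  exact transpose_one

/-- **Linear reciprocity of linear deterministic networks.**  If a linear
deterministic network `N` with `n` unicast messages is solvable over `T` time
steps by a causal linear coding scheme, then so is its reciprocal network
`N′` (edges reversed, channel gain matrices transposed, sources and
destinations swapped). -/
theorem gen_linear_reciprocity [Fact p.Prime] {T : ℕ}
    (hq : 1 ≤ q) (hT : 1 ≤ T) (hn : 1 ≤ n) (hw : ∀ k, 1 ≤ N.w k)
    (h : GLinearlySolvable T N) :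
    GLinearlySolvable T N.reciprocal :=
  gen_linear_reciprocity_general h
end
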